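/- Let V be a 2m-dimensional real vector space with a complex structure J written in a basis e_1,...,e_{2m} as the matrix (J^j_k) (i.e. J e_j = Σ_k J^k_j e_k). If the (0,1)-parts of the dual covectors e^j and e^k (j ≠ k) are complex-proportional, then: J^k_k = -J^j_j, (J^j_j)² + J^j_k J^k_j = -1, and J^j_p = J^k_p = 0 for all p ∉ {j,k}. -/
import Mathlib


open Matrix

noncomputable section

/-- The `(0,1)`-part `(e^j)^{0,1} = -(i/2) Σ_p (J^j_p + i δ^j_p) e^p` of the `j`-th dual
basis covector (equivalently `(1/2)(e^j + i J^* e^j)`), written in coordinates. -/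
def dual01 {n : ℕ} (J : Matrix (Fin n) (Fin n) ℝ) (j : Fin n) : Fin n → ℂ :=
  fun p => (2⁻¹ : ℂ) * ((if p = j then 1 else 0) + Complex.I * (J j p : ℂ))

/-- If the `(0,1)`-parts of the dual covectors `e^j` and `e^k` (`j ≠ k`) are
complex-proportional, then `J^k_k = -J^j_j`, `(J^j_j)² + J^j_k J^k_j = -1`, and
`J^j_p = J^k_p = 0` for all `p ∉ {j, k}`. -/
theorem dual01_proportional_relations (m : ℕ)
    (J : Matrix (Fin (2 * m)) (Fin (2 * m)) ℝ) (hJ : J * J = -1)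
    (j k : Fin (2 * m)) (hjk : j ≠ k)
    (h : ∃ c : ℂ, c ≠ 0 ∧ dual01 J k = c • dual01 J j) :
    J k k = -J j j ∧ J j j ^ 2 + J j k * J k j = -1 ∧
      ∀ p, p ≠ j → p ≠ k → J j p = 0 ∧ J k p = 0 := by
  obtain ⟨c, hc, hprop⟩ := h
  have hj := congrFun hprop j
  have hk := congrFun hprop k
  simp only [dual01, Pi.smul_apply, smul_eq_mul, if_pos rfl, if_neg hjk, if_neg hjk.symm] at hj hk
  have h1 := congrArg Complex.re hj
  have h2 := congrArg Complex.im hj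
  have h3 := congrArg Complex.re hk
  have h4 := congrArg Complex.im hk
  simp [Complex.mul_re, Complex.mul_im, Complex.add_re, Complex.add_im] at h1 h2 h3 h4
  -- h1 : 0 = ... , etc.
  have hb : c.im ≠ 0 := by
    intro hb0
    rw [hb0] at h3
    norm_num at h3
  refine ⟨?_, ?_, ?_⟩
  · linear_combination 2*h4 - 2*(J j k)*h1 + 2*(J j j)*h3
  · linear_combination 2*(J j k)*h2 - 2*(J j j)*(J j k)*h1 + (2 + 2*(J j j)^2)*h3
  · intro p hpj hpk
    have hp := congrFun hprop p
    simp only [dual01, Pi.smul_apply, smul_eq_mul, if_neg hpj, if_neg hpk] at hp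
    have h5 := congrArg Complex.re hp
    have h6 := congrArg Complex.im hp
    simp [Complex.mul_re, Complex.mul_im, Complex.add_re, Complex.add_im] at h5 h6
    have hjp : J j p = 0 := h5.resolve_left hb
    refine ⟨hjp, ?_⟩
    rw [hjp] at h6
    simpa using h6
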